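/- arXiv:2402.04104 — 4 statements merged into one kernel-verified Lean document; each statement's English description precedes it below -/
import Mathlib

section
/- Let f : [0,1] → ℝ be continuous and concave with f(0) = 0 = f(1) and max_{[0,1]} f > 0. Fix ρ_L ∈ (0,1) and α ∈ ℝ with α < −f(ρ_L)/ρ_L. Then there exists a unique ρ_M ∈ (0, ρ_L) such that f(ρ_M) + f(ρ_L) = α (ρ_M − ρ_L). -/
/-!
The equation is a level-crossing problem for the concave function `h x = f x - α x`: it says
`h ρ_M = c` with `c = -f ρ_L - α ρ_L`. The bound on `α` gives `h 0 = 0 < c`, and positivity of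
`f` inside `(0, 1)` gives `c < h ρ_L`. A continuous concave function crosses a level strictly
between its endpoint values exactly once: a second crossing `y < z` below `ρ_L` would put `z`
strictly inside the segment from `y` to `ρ_L`, where concavity forces `h z > c`.
-/

open Set

theorem ConcaveOn.lt_of_mem_openSegment {E : Type*} [AddCommGroup E] [Module ℝ E] {f : E → ℝ}
    {s : Set E} (hf : ConcaveOn ℝ s f) {x y z : E} {c : ℝ} (hx : x ∈ s) (hz : z ∈ s)
    (hy : y ∈ openSegment ℝ x z) (hcx : c ≤ f x) (hcz : c < f z) : c < f y := by
  by_contra! hyc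
  exact (hf.left_lt_of_lt_right hx hz hy (hyc.trans_lt hcz)).not_ge (hyc.trans hcx)

theorem ConcaveOn.pos_of_mem_Ioo {f : ℝ → ℝ} {a b x y : ℝ} (hf : ConcaveOn ℝ (Icc a b) f)
    (ha : 0 ≤ f a) (hb : 0 ≤ f b) (hx : x ∈ Icc a b) (hfx : 0 < f x) (hy : y ∈ Ioo a b) :
    0 < f y := by
  have hay : a ≤ b := hx.1.trans hx.2
  rcases lt_trichotomy x y with hxy | rfl | hyx
  · exact hf.lt_of_mem_openSegment (right_mem_Icc.2 hay) hx
      (openSegment_symm ℝ x b ▸ Ioo_subset_openSegment ⟨hxy, hy.2⟩) hb hfx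
  · exact hfx
  · exact hf.lt_of_mem_openSegment (left_mem_Icc.2 hay) hx (Ioo_subset_openSegment ⟨hy.1, hyx⟩)
      ha hfx

theorem ConcaveOn.existsUnique_mem_Ioo_eq {h : ℝ → ℝ} {a b c : ℝ} (hab : a ≤ b)
    (hcont : ContinuousOn h (Icc a b)) (hconc : ConcaveOn ℝ (Icc a b) h)
    (ha : h a < c) (hb : c < h b) : ∃! x, x ∈ Ioo a b ∧ h x = c := by
  obtain ⟨x, hx, hxc⟩ := intermediate_value_Ioo hab hcont ⟨ha, hb⟩
  refine ⟨x, ⟨hx, hxc⟩, ?_⟩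
  have hIcc {y : ℝ} (hy : y ∈ Ioo a b) : y ∈ Icc a b := Ioo_subset_Icc_self hy
  have no_two_roots {y z : ℝ} (hy : y ∈ Ioo a b) (hz : z ∈ Ioo a b) (hyz : y < z)
      (hfy : h y = c) (hfz : h z = c) : False :=
    (hconc.lt_of_mem_openSegment (hIcc hy) (right_mem_Icc.2 hab)
      (Ioo_subset_openSegment ⟨hyz, hz.2⟩) hfy.ge hb).ne' hfz
  rintro y ⟨hy, hyc⟩
  rcases lt_trichotomy y x with hyx | rfl | hxy
  · exact (no_two_roots hy hx hyx hyc hxc).elim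
  · rfl
  · exact (no_two_roots hx hy hxy hxc hyc).elim

/-- Mirror of Lemma 2.1: existence and uniqueness of the intermediate state `ρ_M` solving
`f(ρ_M) + f(ρ_L) = α (ρ_M − ρ_L)` when `α < −f(ρ_L)/ρ_L`. -/
theorem stmt_1
    (f : ℝ → ℝ)
    (hcont : ContinuousOn f (Set.Icc 0 1))
    (hconc : ConcaveOn ℝ (Set.Icc 0 1) f)
    (hf0 : f 0 = 0) (hf1 : f 1 = 0)
    (hmax : ∃ x ∈ Set.Icc (0:ℝ) 1, 0 < f x)
    (ρL : ℝ) (hρL : ρL ∈ Set.Ioo (0:ℝ) 1)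
    (α : ℝ) (hα : α < -(f ρL / ρL)) :
    ∃! ρM : ℝ, ρM ∈ Set.Ioo 0 ρL ∧ f ρM + f ρL = α * (ρM - ρL) := by
  obtain ⟨hρL0, hρL1⟩ := hρL
  obtain ⟨x₀, hx₀, hfx₀⟩ := hmax
  have hfρL : 0 < f ρL := hconc.pos_of_mem_Ioo hf0.ge hf1.ge hx₀ hfx₀ ⟨hρL0, hρL1⟩
  have hαρL : α * ρL < -f ρL := by rwa [← neg_div, lt_div_iff₀ hρL0] at hα
  have hIcc : Icc 0 ρL ⊆ Icc (0 : ℝ) 1 := Icc_subset_Icc_right hρL1.le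
  have hcont' : ContinuousOn (fun x => f x - α * x) (Icc 0 ρL) :=
    (hcont.mono hIcc).sub (continuousOn_const.mul continuousOn_id)
  have hconc' : ConcaveOn ℝ (Icc 0 ρL) (fun x => f x - α * x) :=
    (hconc.subset hIcc (convex_Icc 0 ρL)).sub
      ((α • LinearMap.id : ℝ →ₗ[ℝ] ℝ).convexOn (convex_Icc 0 ρL))
  have hcross := hconc'.existsUnique_mem_Ioo_eq (c := -f ρL - α * ρL) hρL0.le hcont'
    (by simp only [hf0]; linarith) (by linarith)
  refine (existsUnique_congr fun x => and_congr_right fun _ => ?_).1 hcross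
  constructor <;> intro h <;> linarith
end

section
/- Let f : [0,1] → ℝ be continuous and Lipschitz on [0,1] with constant L > 0, and let k, h > 0 satisfy the CFL condition k·L ≤ h/2. Then the maps (a,b,c) ↦ H^+(a,b,c) := b − (k/h)(h⁺(b,c) − h⁺(a,b)) and (a,b,c) ↦ H^−(a,b,c) := b − (k/h)(h⁻(b,c) − h⁻(a,b)) are nondecreasing in each of the three arguments a, b, c ∈ [0,1]. -/
/-- Godunov numerical flux for the flux `+f`. -/
noncomputable def hplus (f : ℝ → ℝ) (a b : ℝ) : ℝ :=
  if a ≤ b then sInf (f '' Set.Icc a b) else sSup (f '' Set.Icc b a)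

/-- Godunov numerical flux for the flux `−f`. -/
noncomputable def hminus (f : ℝ → ℝ) (a b : ℝ) : ℝ :=
  if a ≤ b then sInf ((fun s => -f s) '' Set.Icc a b)
  else sSup ((fun s => -f s) '' Set.Icc b a)

/-- Godunov marching operator for the flux `+f`. -/
noncomputable def Hplus (f : ℝ → ℝ) (k h a b c : ℝ) : ℝ :=
  b - (k / h) * (hplus f b c - hplus f a b)

/-- Godunov marching operator for the flux `−f`. -/
noncomputable def Hminus (f : ℝ → ℝ) (k h a b c : ℝ) : ℝ :=
  b - (k / h) * (hminus f b c - hminus f a b)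

/-!
The flux `hplus f a b` is nondecreasing in `a`, nonincreasing in `b`, and `L`-Lipschitz in each
argument. In `H⁺(a,b,c) = b - (k/h)(hplus f b c - hplus f a b)` the outer arguments `a` and `c`
therefore enter monotonically, while raising `b` to `b'` changes the flux difference by at most
`2L(b' - b)`, which the CFL condition `(k/h)·2L ≤ 1` absorbs into the leading `b' - b`.
Since `hminus f = hplus (-f)`, the same argument covers `H⁻`.
-/

open Set

section Flux

variable {g : ℝ → ℝ} {s : Set ℝ} [s.OrdConnected] {L a a' b b' : ℝ}

lemma ContinuousOn.bddBelow_image_Icc (hg : ContinuousOn g s) (ha : a ∈ s) (hb : b ∈ s) :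
    BddBelow (g '' Icc a b) :=
  isCompact_Icc.bddBelow_image (hg.mono (Set.Icc_subset s ha hb))

lemma ContinuousOn.bddAbove_image_Icc (hg : ContinuousOn g s) (ha : a ∈ s) (hb : b ∈ s) :
    BddAbove (g '' Icc a b) :=
  isCompact_Icc.bddAbove_image (hg.mono (Set.Icc_subset s ha hb))

lemma hplus_eq_neg_hplus_neg_swap (g : ℝ → ℝ) (a b : ℝ) :
    hplus g a b = -hplus (fun x => -g x) b a := by
  have image_neg : ∀ t : Set ℝ, (fun x => -g x) '' t = -(g '' t) := fun t => by
    rw [← image_neg_eq_neg, image_image]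
  rcases lt_trichotomy a b with hab | rfl | hab
  · rw [hplus, hplus, if_pos hab.le, if_neg hab.not_ge, image_neg, Real.sSup_neg, neg_neg]
  · simp [hplus]
  · rw [hplus, hplus, if_neg hab.not_ge, if_pos hab.le, image_neg, Real.sInf_neg, neg_neg]

lemma hplus_mono_left (hg : ContinuousOn g s) (ha : a ∈ s) (ha' : a' ∈ s) (hb : b ∈ s)
    (haa : a ≤ a') : hplus g a b ≤ hplus g a' b := by
  unfold hplus
  split_ifs with h₁ h₂ h₂
  · exact csInf_le_csInf (hg.bddBelow_image_Icc ha hb) ((nonempty_Icc.2 h₂).image g)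
      (image_mono (Icc_subset_Icc_left haa))
  · calc sInf (g '' Icc a b) ≤ g b :=
          csInf_le (hg.bddBelow_image_Icc ha hb) (mem_image_of_mem g (right_mem_Icc.2 h₁))
      _ ≤ sSup (g '' Icc b a') :=
          le_csSup (hg.bddAbove_image_Icc hb ha')
            (mem_image_of_mem g (left_mem_Icc.2 (not_le.1 h₂).le))
  · exact (h₁ (haa.trans h₂)).elim
  · exact csSup_le_csSup (hg.bddAbove_image_Icc hb ha')
      ((nonempty_Icc.2 (not_le.1 h₁).le).image g) (image_mono (Icc_subset_Icc_right haa))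

lemma hplus_sub_hplus_le_left (hg : ContinuousOn g s) (hL : 0 ≤ L)
    (hlip : ∀ x ∈ s, ∀ y ∈ s, x ≤ y → g y ≤ g x + L * (y - x))
    (ha : a ∈ s) (ha' : a' ∈ s) (hb : b ∈ s) (haa : a ≤ a') :
    hplus g a' b - hplus g a b ≤ L * (a' - a) := by
  rw [sub_le_iff_le_add]
  unfold hplus
  split_ifs with h₁ h₂ h₂
  · -- compare each `x ∈ [a, b]` with its projection `max x a'` onto `[a', b]`
    rw [← sub_le_iff_le_add']
    refine le_csInf ((nonempty_Icc.2 h₂).image g) (forall_mem_image.2 fun x hx => ?_)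
    have hy : max x a' ∈ Icc a' b := ⟨le_max_right _ _, max_le hx.2 h₁⟩
    have := hlip x (Set.Icc_subset s ha hb hx) _ (Set.Icc_subset s ha' hb hy) (le_max_left _ _)
    have : max x a' - x ≤ a' - a :=
      sub_le_iff_le_add.2 (max_le (by linarith) (by linarith [hx.1]))
    have := mul_le_mul_of_nonneg_left this hL
    linarith [csInf_le (hg.bddBelow_image_Icc ha' hb) (mem_image_of_mem g hy)]
  · exact (h₂ (haa.trans h₁)).elim
  · refine csSup_le ((nonempty_Icc.2 (not_le.1 h₁).le).image g)
      (forall_mem_image.2 fun y hy => ?_)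
    rw [← sub_le_iff_le_add']
    refine le_csInf ((nonempty_Icc.2 h₂).image g) (forall_mem_image.2 fun x hx => ?_)
    have := hlip x (Set.Icc_subset s ha hb hx) y (Set.Icc_subset s hb ha' hy) (hx.2.trans hy.1)
    have : L * (y - x) ≤ L * (a' - a) := mul_le_mul_of_nonneg_left (by linarith [hx.1, hy.2]) hL
    linarith
  · -- compare each `y ∈ [b, a']` with its projection `min y a` onto `[b, a]`
    refine csSup_le ((nonempty_Icc.2 (not_le.1 h₁).le).image g)
      (forall_mem_image.2 fun y hy => ?_)
    have hx : min y a ∈ Icc b a := ⟨le_min hy.1 (not_le.1 h₂).le, min_le_right _ _⟩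
    have := hlip _ (Set.Icc_subset s hb ha hx) y (Set.Icc_subset s hb ha' hy) (min_le_left _ _)
    have : y - min y a ≤ a' - a := sub_le_comm.1 (le_min (by linarith) (by linarith [hy.2]))
    have := mul_le_mul_of_nonneg_left this hL
    linarith [le_csSup (hg.bddAbove_image_Icc hb ha) (mem_image_of_mem g hx)]

lemma hplus_anti_right (hg : ContinuousOn g s) (ha : a ∈ s) (hb : b ∈ s) (hb' : b' ∈ s)
    (hbb : b ≤ b') : hplus g a b' ≤ hplus g a b := by
  rw [hplus_eq_neg_hplus_neg_swap g a b', hplus_eq_neg_hplus_neg_swap g a b]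
  exact neg_le_neg (hplus_mono_left (g := fun x => -g x) hg.neg hb hb' ha hbb)

lemma hplus_sub_hplus_le_right (hg : ContinuousOn g s) (hL : 0 ≤ L)
    (hlip : ∀ x ∈ s, ∀ y ∈ s, x ≤ y → g x ≤ g y + L * (y - x))
    (ha : a ∈ s) (hb : b ∈ s) (hb' : b' ∈ s) (hbb : b ≤ b') :
    hplus g a b - hplus g a b' ≤ L * (b' - b) := by
  rw [hplus_eq_neg_hplus_neg_swap g a b', hplus_eq_neg_hplus_neg_swap g a b]
  have := hplus_sub_hplus_le_left (g := fun x => -g x) hg.neg hL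
    (fun x hx y hy hxy => show -g y ≤ -g x + L * (y - x) by linarith [hlip x hx y hy hxy])
    hb hb' ha hbb
  linarith

end Flux

lemma Hplus_le_Hplus {g : ℝ → ℝ} {s : Set ℝ} [s.OrdConnected] {L k h : ℝ}
    (hg : ContinuousOn g s) (hL : 0 ≤ L)
    (hlip : ∀ x ∈ s, ∀ y ∈ s, |g x - g y| ≤ L * |x - y|)
    (hk : 0 ≤ k) (hh : 0 < h) (hCFL : k * L ≤ h / 2)
    {a a' b b' c c' : ℝ} (ha : a ∈ s) (ha' : a' ∈ s) (hb : b ∈ s) (hb' : b' ∈ s)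
    (hc : c ∈ s) (hc' : c' ∈ s) (haa : a ≤ a') (hbb : b ≤ b') (hcc : c ≤ c') :
    Hplus g k h a b c ≤ Hplus g k h a' b' c' := by
  have hlip_abs : ∀ x ∈ s, ∀ y ∈ s, x ≤ y → |g y - g x| ≤ L * (y - x) :=
    fun x hx y hy hxy => by simpa [abs_of_nonneg (sub_nonneg.2 hxy)] using hlip y hy x hx
  have hup : ∀ x ∈ s, ∀ y ∈ s, x ≤ y → g y ≤ g x + L * (y - x) :=
    fun x hx y hy hxy => by linarith [le_abs_self (g y - g x), hlip_abs x hx y hy hxy]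
  have hdown : ∀ x ∈ s, ∀ y ∈ s, x ≤ y → g x ≤ g y + L * (y - x) :=
    fun x hx y hy hxy => by linarith [neg_abs_le (g y - g x), hlip_abs x hx y hy hxy]
  have hratio : k / h * (2 * L) ≤ 1 := by
    rw [div_mul_eq_mul_div, div_le_one hh]
    linarith
  set D := (hplus g b' c' - hplus g a' b') - (hplus g b c - hplus g a b)
  have hflux : D ≤ 2 * L * (b' - b) := by
    linarith [hplus_mono_left hg ha ha' hb haa, hplus_anti_right hg hb hc hc' hcc,
      hplus_sub_hplus_le_left hg hL hup hb hb' hc' hbb,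
      hplus_sub_hplus_le_right hg hL hdown ha' hb hb' hbb]
  have hstep : k / h * D ≤ b' - b :=
    calc _ ≤ k / h * (2 * L * (b' - b)) := mul_le_mul_of_nonneg_left hflux (div_nonneg hk hh.le)
      _ = k / h * (2 * L) * (b' - b) := by ring
      _ ≤ 1 * (b' - b) := mul_le_mul_of_nonneg_right hratio (sub_nonneg.2 hbb)
      _ = b' - b := one_mul _
  unfold Hplus
  linarith

/-- Under the CFL condition `kL ≤ h/2`, the marching operators `H^±` are nondecreasing
in each of their three arguments. -/
theorem stmt_11
    (f : ℝ → ℝ)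
    (hcont : ContinuousOn f (Set.Icc 0 1))
    (L : ℝ) (hL : 0 < L)
    (hlip : ∀ x ∈ Set.Icc (0:ℝ) 1, ∀ y ∈ Set.Icc (0:ℝ) 1, |f x - f y| ≤ L * |x - y|)
    (k h : ℝ) (hk : 0 < k) (hh : 0 < h)
    (hCFL : k * L ≤ h / 2) :
    ∀ a a' b b' c c' : ℝ,
      a ∈ Set.Icc (0:ℝ) 1 → a' ∈ Set.Icc (0:ℝ) 1 →
      b ∈ Set.Icc (0:ℝ) 1 → b' ∈ Set.Icc (0:ℝ) 1 →
      c ∈ Set.Icc (0:ℝ) 1 → c' ∈ Set.Icc (0:ℝ) 1 →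
      a ≤ a' → b ≤ b' → c ≤ c' →
      Hplus f k h a b c ≤ Hplus f k h a' b' c' ∧
      Hminus f k h a b c ≤ Hminus f k h a' b' c' := by
  intro a a' b b' c c' ha ha' hb hb' hc hc' haa hbb hcc
  have hlip_neg : ∀ x ∈ Icc (0:ℝ) 1, ∀ y ∈ Icc (0:ℝ) 1, |-f x - -f y| ≤ L * |x - y| :=
    fun x hx y hy => by simpa only [neg_sub_neg, abs_sub_comm] using hlip x hx y hy
  have hminus_eq : Hminus f k h = Hplus (fun x => -f x) k h := rfl
  rw [hminus_eq]
  exact ⟨Hplus_le_Hplus hcont hL.le hlip hk.le hh hCFL ha ha' hb hb' hc hc' haa hbb hcc,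
    Hplus_le_Hplus hcont.neg hL.le hlip_neg hk.le hh hCFL ha ha' hb hb' hc hc' haa hbb hcc⟩
end

section
/- Let f : [0,1] → ℝ be continuous, let α ∈ ℝ, k, h > 0 and Δ_L, Δ_R with Δ_L + αk > 0, Δ_R − αk > 0, Δ_L + h + αk > 0 and Δ_R + h − αk > 0. Suppose b, c ∈ [0,1] satisfy the Rankine–Hugoniot condition f(b) + f(c) = α (c − b). Then H^{AB}_L(b,b,c) = b, H^C_L(b,b,b,c) = b, H^{AC}_R(b,c,c) = c, and H^B_R(b,c,c,c) = c. -/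
/-- Godunov-type interface flux along the interface of slope `α`. -/
noncomputable def h0flux (f : ℝ → ℝ) (a b α : ℝ) : ℝ :=
  -max (α * b - f b) 0 + max (-α * a - f a) 0

/-- Left interface marching operator (Cases A, B). -/
noncomputable def HABL (f : ℝ → ℝ) (α k ΔL a b c : ℝ) : ℝ :=
  (ΔL * b - k * (h0flux f b c α - hminus f a b)) / (ΔL + α * k)

/-- Right interface marching operator (Cases A, C). -/
noncomputable def HACR (f : ℝ → ℝ) (α k ΔR a b c : ℝ) : ℝ :=
  (ΔR * b - k * (hplus f b c - h0flux f a b α)) / (ΔR - α * k)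

/-- Left interface marching operator (Case C). -/
noncomputable def HCL (f : ℝ → ℝ) (α k h ΔL a b c d : ℝ) : ℝ :=
  (ΔL * b + h * c - k * (h0flux f c d α - hminus f a b)) / (ΔL + h + α * k)

/-- Right interface marching operator (Case B). -/
noncomputable def HBR (f : ℝ → ℝ) (α k h ΔR a b c d : ℝ) : ℝ :=
  (ΔR * b + h * c - k * (hplus f c d - h0flux f a b α)) / (ΔR + h - α * k)

/-! On a constant state the Godunov fluxes reduce to `f` and `-f`. The Rankine–Hugoniot
condition says `α c - f c = α b + f b`, so the two ramps in the interface flux `h₀(b, c, α)`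
are evaluated at opposite arguments and collapse to `-(α b + f b)`; with these values every
marching formula becomes a linear identity that returns its input state. -/

lemma hplus_self (f : ℝ → ℝ) (a : ℝ) : hplus f a a = f a := by
  simp [hplus]

lemma hminus_self (f : ℝ → ℝ) (a : ℝ) : hminus f a a = -f a := by
  simp [hminus]

lemma h0flux_eq_of_rankineHugoniot {f : ℝ → ℝ} {α a b : ℝ}
    (hRH : f a + f b = α * (b - a)) : h0flux f a b α = -(α * a + f a) := by
  have hb : α * b - f b = α * a + f a := by linarith
  rw [h0flux, hb, show -α * a - f a = -(α * a + f a) by ring]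
  linarith [max_zero_sub_eq_self (α * a + f a)]

theorem stmt_15_general
    (f : ℝ → ℝ)
    (α k h ΔL ΔR : ℝ)
    (hL1 : 0 < ΔL + α * k) (hR1 : 0 < ΔR - α * k)
    (hL2 : 0 < ΔL + h + α * k) (hR2 : 0 < ΔR + h - α * k)
    (b c : ℝ)
    (hRH : f b + f c = α * (c - b)) :
    HABL f α k ΔL b b c = b ∧
    HCL f α k h ΔL b b b c = b ∧
    HACR f α k ΔR b c c = c ∧
    HBR f α k h ΔR b c c c = c := by
  have h0 := h0flux_eq_of_rankineHugoniot hRH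
  refine ⟨?_, ?_, ?_, ?_⟩
  · rw [HABL, hminus_self, h0, div_eq_iff hL1.ne']; ring
  · rw [HCL, hminus_self, h0, div_eq_iff hL2.ne']; ring
  · rw [HACR, hplus_self, h0, div_eq_iff hR1.ne']; linear_combination (-k) * hRH
  · rw [HBR, hplus_self, h0, div_eq_iff hR2.ne']; linear_combination (-k) * hRH

/-- Two-state profiles whose traces satisfy the Rankine–Hugoniot condition (i.e. lie
in the germ `G̃_α`) are exactly preserved by the interface marching formulas. -/
theorem stmt_15
    (f : ℝ → ℝ)
    (hcont : ContinuousOn f (Set.Icc 0 1))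
    (α k h ΔL ΔR : ℝ) (hk : 0 < k) (hh : 0 < h)
    (hL1 : 0 < ΔL + α * k) (hR1 : 0 < ΔR - α * k)
    (hL2 : 0 < ΔL + h + α * k) (hR2 : 0 < ΔR + h - α * k)
    (b c : ℝ) (hb : b ∈ Set.Icc (0:ℝ) 1) (hc : c ∈ Set.Icc (0:ℝ) 1)
    (hRH : f b + f c = α * (c - b)) :
    HABL f α k ΔL b b c = b ∧
    HCL f α k h ΔL b b b c = b ∧
    HACR f α k ΔR b c c = c ∧
    HBR f α k h ΔR b c c c = c :=
  stmt_15_general f α k h ΔL ΔR hL1 hR1 hL2 hR2 b c hRH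
end

section
/- Let f : [0,1] → ℝ be continuous and Lipschitz on [0,1] with constant L > 0, and let k, h > 0 satisfy the CFL condition k·L ≤ h/2. Then for all a, b, c, κ ∈ [0,1] and for both sign choices ±: h·|H^±(a,b,c) − κ| ≤ h·|b − κ| − k·[(h^±(b∨κ, c∨κ) − h^±(b∧κ, c∧κ)) − (h^±(a∨κ, b∨κ) − h^±(a∧κ, b∧κ))], where ∨ and ∧ denote max and min. (Discrete Kruzhkov entropy inequality on the standard cells.) -/
/-!
The Godunov flux `hplus f a b` is nondecreasing in `a`, nonincreasing in `b`, and `K`-Lipschitz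
in each argument, because a minimum or maximum of a `K`-Lipschitz function over an interval moves
by at most `K` times the displacement of the endpoints. Under the CFL condition `2 (k/h) K ≤ 1` the
marching operator `H⁺` is therefore a monotone function of `(a, b, c)`, and it fixes constant
states. For such a map `G`, `|G x - κ| ≤ G (x ⊔ κ) - G (x ⊓ κ)` (Crandall–Majda), and expanding the
right-hand side produces the discrete entropy fluxes.
-/

open Set
open scoped NNReal

section IntervalExtrema

variable {f : ℝ → ℝ} {K : ℝ≥0}

theorem csInf_image_le_csInf_image_add {S T : Set ℝ} {d : ℝ} (hf : LipschitzOnWith K f T)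
    (hS : S.Nonempty) (hST : S ⊆ T) (hT : BddBelow (f '' T))
    (hd : ∀ x ∈ T, ∃ p ∈ S, dist p x ≤ d) :
    sInf (f '' S) ≤ sInf (f '' T) + K * d := by
  rw [← sub_le_iff_le_add]
  refine le_csInf ((hS.mono hST).image f) ?_
  rintro _ ⟨x, hx, rfl⟩
  obtain ⟨p, hp, hpx⟩ := hd x hx
  have hfp : sInf (f '' S) ≤ f p := csInf_le (hT.mono (image_mono hST)) (mem_image_of_mem f hp)
  have hlip : dist (f p) (f x) ≤ K * d :=
    (hf.dist_le_mul p (hST hp) x hx).trans (mul_le_mul_of_nonneg_left hpx K.coe_nonneg)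
  linarith [(le_abs_self _).trans (Real.dist_eq (f p) (f x) ▸ hlip)]

theorem csSup_image_le_csSup_image_add {S T : Set ℝ} {d : ℝ} (hf : LipschitzOnWith K f T)
    (hS : S.Nonempty) (hST : S ⊆ T) (hT : BddAbove (f '' T))
    (hd : ∀ x ∈ T, ∃ p ∈ S, dist p x ≤ d) :
    sSup (f '' T) ≤ sSup (f '' S) + K * d := by
  refine csSup_le ((hS.mono hST).image f) ?_
  rintro _ ⟨x, hx, rfl⟩
  obtain ⟨p, hp, hpx⟩ := hd x hx
  have hfp : f p ≤ sSup (f '' S) := le_csSup (hT.mono (image_mono hST)) (mem_image_of_mem f hp)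
  have hlip : dist (f x) (f p) ≤ K * d :=
    (hf.dist_le_mul x hx p (hST hp)).trans
      (mul_le_mul_of_nonneg_left (dist_comm x p ▸ hpx) K.coe_nonneg)
  linarith [(le_abs_self _).trans (Real.dist_eq (f x) (f p) ▸ hlip)]

theorem exists_mem_Icc_dist_le {u u' v' v : ℝ} (hu : u ≤ u') (hu'v' : u' ≤ v') (hv : v' ≤ v) :
    ∀ x ∈ Icc u v, ∃ p ∈ Icc u' v', dist p x ≤ u' - u + (v - v') := by
  intro x hx
  refine ⟨max u' (min x v'), ⟨le_max_left _ _, max_le hu'v' (min_le_right _ _)⟩, ?_⟩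
  rw [Real.dist_eq, abs_le]
  constructor <;> simp only [max_def, min_def] <;> split_ifs <;> linarith [hx.1, hx.2]

variable {u u' v' v : ℝ}

theorem sInf_image_Icc_sub_mem_Icc (hu : u ≤ u') (hu'v' : u' ≤ v') (hv : v' ≤ v)
    (hf : LipschitzOnWith K f (Icc u v)) (hbdd : BddBelow (f '' Icc u v)) :
    sInf (f '' Icc u' v') - sInf (f '' Icc u v) ∈ Icc 0 (K * (u' - u + (v - v'))) := by
  have hsub : Icc u' v' ⊆ Icc u v := Icc_subset_Icc hu hv
  have hne : (Icc u' v').Nonempty := nonempty_Icc.2 hu'v'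
  constructor
  · exact sub_nonneg.2 (csInf_le_csInf hbdd (hne.image f) (image_mono hsub))
  · exact sub_le_iff_le_add'.2 (csInf_image_le_csInf_image_add hf hne hsub hbdd
      (exists_mem_Icc_dist_le hu hu'v' hv))

theorem sSup_image_Icc_sub_mem_Icc (hu : u ≤ u') (hu'v' : u' ≤ v') (hv : v' ≤ v)
    (hf : LipschitzOnWith K f (Icc u v)) (hbdd : BddAbove (f '' Icc u v)) :
    sSup (f '' Icc u v) - sSup (f '' Icc u' v') ∈ Icc 0 (K * (u' - u + (v - v'))) := by
  have hsub : Icc u' v' ⊆ Icc u v := Icc_subset_Icc hu hv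
  have hne : (Icc u' v').Nonempty := nonempty_Icc.2 hu'v'
  constructor
  · exact sub_nonneg.2 (csSup_le_csSup hbdd (hne.image f) (image_mono hsub))
  · exact sub_le_iff_le_add'.2 (csSup_image_le_csSup_image_add hf hne hsub hbdd
      (exists_mem_Icc_dist_le hu hu'v' hv))

end IntervalExtrema

section GodunovFlux

variable {f : ℝ → ℝ} {K : ℝ≥0} {s : Set ℝ}

theorem hplus_of_le {a b : ℝ} (hab : a ≤ b) : hplus f a b = sInf (f '' Icc a b) :=
  if_pos hab

theorem hplus_of_ge {a b : ℝ} (hba : b ≤ a) : hplus f a b = sSup (f '' Icc b a) := by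
  rcases hba.lt_or_eq with hlt | rfl
  · exact if_neg hlt.not_ge
  · simp [hplus]

theorem hplus_sub_hplus_left_mem_Icc (hs : s.OrdConnected) (hf : LipschitzOnWith K f s)
    (hbdd : BddBelow (f '' s)) (hbdd' : BddAbove (f '' s)) {a₁ a₂ b : ℝ}
    (ha₁ : a₁ ∈ s) (ha₂ : a₂ ∈ s) (hb : b ∈ s) (ha : a₁ ≤ a₂) :
    hplus f a₂ b - hplus f a₁ b ∈ Icc 0 (K * (a₂ - a₁)) := by
  have same_side : ∀ {x y}, x ∈ s → y ∈ s → x ≤ y → y ≤ b ∨ b ≤ x →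
      hplus f y b - hplus f x b ∈ Icc 0 (K * (y - x)) := by
    rintro x y hx hy hxy (hyb | hbx)
    · rw [hplus_of_le hyb, hplus_of_le (hxy.trans hyb)]
      simpa using sInf_image_Icc_sub_mem_Icc hxy hyb le_rfl (hf.mono (hs.out hx hb))
        (hbdd.mono (image_mono (hs.out hx hb)))
    · rw [hplus_of_ge hbx, hplus_of_ge (hbx.trans hxy)]
      simpa using sSup_image_Icc_sub_mem_Icc le_rfl hbx hxy (hf.mono (hs.out hb hy))
        (hbdd'.mono (image_mono (hs.out hb hy)))
  rcases le_total a₂ b with h₂ | h₂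
  · exact same_side ha₁ ha₂ ha (.inl h₂)
  rcases le_total b a₁ with h₁ | h₁
  · exact same_side ha₁ ha₂ ha (.inr h₁)
  -- pivot at `b`, where the flux switches from a minimum to a maximum
  obtain ⟨hl₁, hu₁⟩ := same_side ha₁ hb h₁ (.inl le_rfl)
  obtain ⟨hl₂, hu₂⟩ := same_side hb ha₂ h₂ (.inr le_rfl)
  constructor <;> linarith

theorem hplus_sub_hplus_right_mem_Icc (hs : s.OrdConnected) (hf : LipschitzOnWith K f s)
    (hbdd : BddBelow (f '' s)) (hbdd' : BddAbove (f '' s)) {a b₁ b₂ : ℝ}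
    (ha : a ∈ s) (hb₁ : b₁ ∈ s) (hb₂ : b₂ ∈ s) (hb : b₁ ≤ b₂) :
    hplus f a b₁ - hplus f a b₂ ∈ Icc 0 (K * (b₂ - b₁)) := by
  have same_side : ∀ {x y}, x ∈ s → y ∈ s → x ≤ y → a ≤ x ∨ y ≤ a →
      hplus f a x - hplus f a y ∈ Icc 0 (K * (y - x)) := by
    rintro x y hx hy hxy (hax | hya)
    · rw [hplus_of_le hax, hplus_of_le (hax.trans hxy)]
      simpa using sInf_image_Icc_sub_mem_Icc le_rfl hax hxy (hf.mono (hs.out ha hy))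
        (hbdd.mono (image_mono (hs.out ha hy)))
    · rw [hplus_of_ge hya, hplus_of_ge (hxy.trans hya)]
      simpa using sSup_image_Icc_sub_mem_Icc hxy hya le_rfl (hf.mono (hs.out hx ha))
        (hbdd'.mono (image_mono (hs.out hx ha)))
  rcases le_total a b₁ with h₁ | h₁
  · exact same_side hb₁ hb₂ hb (.inl h₁)
  rcases le_total b₂ a with h₂ | h₂
  · exact same_side hb₁ hb₂ hb (.inr h₂)
  obtain ⟨hl₁, hu₁⟩ := same_side hb₁ ha h₁ (.inr le_rfl)
  obtain ⟨hl₂, hu₂⟩ := same_side ha hb₂ h₂ (.inl le_rfl)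
  constructor <;> linarith

end GodunovFlux

theorem MonotoneOn.abs_sub_le_sup_sub_inf {α β : Type*} [Lattice α] [AddCommGroup β]
    [LinearOrder β] [IsOrderedAddMonoid β] {G : α → β} {t : Set α} (hG : MonotoneOn G t)
    {x y : α} (hx : x ∈ t) (hy : y ∈ t) (hsup : x ⊔ y ∈ t) (hinf : x ⊓ y ∈ t) :
    |G x - G y| ≤ G (x ⊔ y) - G (x ⊓ y) :=
  abs_sub_le_iff.2
    ⟨sub_le_sub (hG hx hsup le_sup_left) (hG hinf hy inf_le_right),
      sub_le_sub (hG hy hsup le_sup_right) (hG hinf hx inf_le_left)⟩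

section GodunovScheme

variable {f : ℝ → ℝ} {K : ℝ≥0} {s : Set ℝ} {k h : ℝ}

theorem Hplus_self (κ : ℝ) : Hplus f k h κ κ κ = κ := by
  simp [Hplus]

theorem monotoneOn_Hplus (hs : s.OrdConnected) (hf : LipschitzOnWith K f s)
    (hbdd : BddBelow (f '' s)) (hbdd' : BddAbove (f '' s))
    (hk : 0 ≤ k) (hh : 0 < h) (hCFL : k * K ≤ h / 2) :
    MonotoneOn (fun p : ℝ × ℝ × ℝ => Hplus f k h p.1 p.2.1 p.2.2) (s ×ˢ s ×ˢ s) := by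
  rintro ⟨a₁, b₁, c₁⟩ ⟨ha₁, hb₁, hc₁⟩ ⟨a₂, b₂, c₂⟩ ⟨ha₂, hb₂, hc₂⟩ ⟨ha, hb, hc⟩
  have hr : 0 ≤ k / h := div_nonneg hk hh.le
  have hrK : k / h * K ≤ 1 / 2 := by
    rw [div_mul_eq_mul_div, div_le_iff₀ hh]
    linarith
  obtain ⟨-, hbc⟩ := hplus_sub_hplus_left_mem_Icc hs hf hbdd hbdd' hb₁ hb₂ hc₂ hb
  obtain ⟨hc', -⟩ := hplus_sub_hplus_right_mem_Icc hs hf hbdd hbdd' hb₁ hc₁ hc₂ hc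
  obtain ⟨ha', -⟩ := hplus_sub_hplus_left_mem_Icc hs hf hbdd hbdd' ha₁ ha₂ hb₂ ha
  obtain ⟨-, hab⟩ := hplus_sub_hplus_right_mem_Icc hs hf hbdd hbdd' ha₁ hb₁ hb₂ hb
  -- in `b` the two Lipschitz bounds cost `2 (k/h) K (b₂ - b₁) ≤ b₂ - b₁`: the CFL condition
  simp only [Hplus]
  linarith [mul_le_mul_of_nonneg_left hbc hr, mul_nonneg hr hc', mul_nonneg hr ha',
    mul_le_mul_of_nonneg_left hab hr, mul_nonneg (sub_nonneg.2 hb) (sub_nonneg.2 hrK)]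

theorem mul_abs_Hplus_sub_le (hs : IsCompact s) (hs' : s.OrdConnected)
    (hf : LipschitzOnWith K f s) (hk : 0 ≤ k) (hh : 0 < h) (hCFL : k * K ≤ h / 2)
    {a b c κ : ℝ} (ha : a ∈ s) (hb : b ∈ s) (hc : c ∈ s) (hκ : κ ∈ s) :
    h * |Hplus f k h a b c - κ| ≤ h * |b - κ| -
      k * ((hplus f (b ⊔ κ) (c ⊔ κ) - hplus f (b ⊓ κ) (c ⊓ κ)) -
           (hplus f (a ⊔ κ) (b ⊔ κ) - hplus f (a ⊓ κ) (b ⊓ κ))) := by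
  have hbounded := hs.image_of_continuousOn hf.continuousOn
  have hmono := monotoneOn_Hplus hs' hf hbounded.bddBelow hbounded.bddAbove hk hh hCFL
  have hcut := hmono.abs_sub_le_sup_sub_inf (x := (a, b, c)) (y := (κ, κ, κ))
    ⟨ha, hb, hc⟩ ⟨hκ, hκ, hκ⟩
    ⟨sup_ind _ _ ha hκ, sup_ind _ _ hb hκ, sup_ind _ _ hc hκ⟩
    ⟨inf_ind _ _ ha hκ, inf_ind _ _ hb hκ, inf_ind _ _ hc hκ⟩
  dsimp only at hcut
  rw [Hplus_self] at hcut
  calc h * |Hplus f k h a b c - κ|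
      ≤ h * (Hplus f k h (a ⊔ κ) (b ⊔ κ) (c ⊔ κ) - Hplus f k h (a ⊓ κ) (b ⊓ κ) (c ⊓ κ)) :=
        mul_le_mul_of_nonneg_left hcut hh.le
    _ = _ := by
        rw [← max_sub_min_eq_abs' b κ]
        simp only [Hplus]
        field_simp
        ring

end GodunovScheme

theorem stmt_17_general
    (f : ℝ → ℝ)
    (L : ℝ) (hL : 0 < L)
    (hlip : ∀ x ∈ Set.Icc (0:ℝ) 1, ∀ y ∈ Set.Icc (0:ℝ) 1, |f x - f y| ≤ L * |x - y|)
    (k h : ℝ) (hk : 0 < k) (hh : 0 < h)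
    (hCFL : k * L ≤ h / 2) :
    ∀ a b c κ : ℝ, a ∈ Set.Icc (0:ℝ) 1 → b ∈ Set.Icc (0:ℝ) 1 →
      c ∈ Set.Icc (0:ℝ) 1 → κ ∈ Set.Icc (0:ℝ) 1 →
      h * |Hplus f k h a b c - κ| ≤ h * |b - κ| -
        k * ((hplus f (b ⊔ κ) (c ⊔ κ) - hplus f (b ⊓ κ) (c ⊓ κ)) -
             (hplus f (a ⊔ κ) (b ⊔ κ) - hplus f (a ⊓ κ) (b ⊓ κ))) ∧
      h * |Hminus f k h a b c - κ| ≤ h * |b - κ| -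
        k * ((hminus f (b ⊔ κ) (c ⊔ κ) - hminus f (b ⊓ κ) (c ⊓ κ)) -
             (hminus f (a ⊔ κ) (b ⊔ κ) - hminus f (a ⊓ κ) (b ⊓ κ))) := by
  intro a b c κ ha hb hc hκ
  let K : ℝ≥0 := ⟨L, hL.le⟩
  have hf : LipschitzOnWith K f (Icc 0 1) := .of_dist_le_mul fun x hx y hy => by
    rw [Real.dist_eq, Real.dist_eq]
    exact hlip x hx y hy
  have hf_neg : LipschitzOnWith K (fun s => -f s) (Icc 0 1) := .of_dist_le_mul fun x hx y hy => by
    simpa only [dist_neg_neg] using hf.dist_le_mul x hx y hy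
  -- `H⁻` for `f` is, by definition, `H⁺` for `-f`
  exact ⟨mul_abs_Hplus_sub_le isCompact_Icc ordConnected_Icc hf hk.le hh hCFL ha hb hc hκ,
    mul_abs_Hplus_sub_le isCompact_Icc ordConnected_Icc hf_neg hk.le hh hCFL ha hb hc hκ⟩

/-- Discrete Kruzhkov entropy inequality on the standard cells, for both Godunov
marching operators `H^±`. -/
theorem stmt_17
    (f : ℝ → ℝ)
    (hcont : ContinuousOn f (Set.Icc 0 1))
    (L : ℝ) (hL : 0 < L)
    (hlip : ∀ x ∈ Set.Icc (0:ℝ) 1, ∀ y ∈ Set.Icc (0:ℝ) 1, |f x - f y| ≤ L * |x - y|)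
    (k h : ℝ) (hk : 0 < k) (hh : 0 < h)
    (hCFL : k * L ≤ h / 2) :
    ∀ a b c κ : ℝ, a ∈ Set.Icc (0:ℝ) 1 → b ∈ Set.Icc (0:ℝ) 1 →
      c ∈ Set.Icc (0:ℝ) 1 → κ ∈ Set.Icc (0:ℝ) 1 →
      h * |Hplus f k h a b c - κ| ≤ h * |b - κ| -
        k * ((hplus f (b ⊔ κ) (c ⊔ κ) - hplus f (b ⊓ κ) (c ⊓ κ)) -
             (hplus f (a ⊔ κ) (b ⊔ κ) - hplus f (a ⊓ κ) (b ⊓ κ))) ∧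
      h * |Hminus f k h a b c - κ| ≤ h * |b - κ| -
        k * ((hminus f (b ⊔ κ) (c ⊔ κ) - hminus f (b ⊓ κ) (c ⊓ κ)) -
             (hminus f (a ⊔ κ) (b ⊔ κ) - hminus f (a ⊓ κ) (b ⊓ κ))) :=
  stmt_17_general f L hL hlip k h hk hh hCFL
end
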